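/- arXiv:2306.14474 — 2 statements merged into one kernel-verified Lean document; each statement's English description precedes it below -/
import Mathlib

section
/- Let p ≥ 3 be an odd integer. In the ring R = ℤ[X]/((X^p − 1)·ℤ[X]), let σ denote the image of X, set λ = 1 − σ, let ε : R → ℤ be the ring homomorphism induced by X ↦ 1, and let I = ker ε. Then the ideal I², i.e., the square of the ideal I, equals the ℤ-submodule of R spanned by {p·λ, λ², λ³, …, λ^{p−1}}; in fact I² = p·ℤ·λ ⊕ ⊕_{k=2}^{p−1} ℤ·λ^k as an internal direct sum of abelian groups. -/
/-!
Since `ε σ = 1` and `σ` generates `R`, the augmentation ideal is `I = (λ)`, so `I² = (λ²)`.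
Expanding `1 = σ ^ p = (1 - λ) ^ p` gives `p • λ = ∑_{j=2}^{p} (-1)^j (p choose j) λ^j`. Read one
way this puts `p • λ` in `(λ²)`; read the other way it puts `λ ^ p` in the `ℤ`-span `N` of
`p • λ, λ², …, λ^(p-1)`, so `N` is stable under multiplication by `λ`, hence an ideal, and it
contains `λ²`. The sum is direct because `1, λ, …, λ^(p-1)` are `ℤ`-linearly independent: a
relation among them is a polynomial of degree `< p` in `1 - X` divisible by `X ^ p - 1`.
-/

open Polynomial

theorem Submodule.mul_mem_of_adjoin_eq_top {R B : Type*} [CommSemiring R] [Semiring B]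
    [Algebra R B] {x : B} (hx : Algebra.adjoin R {x} = ⊤) {N : Submodule R B}
    (hN : ∀ n ∈ N, x * n ∈ N) (b : B) {n : B} (hn : n ∈ N) : b * n ∈ N := by
  have hb : b ∈ Algebra.adjoin R {x} := hx ▸ Algebra.mem_top
  induction hb using Algebra.adjoin_induction generalizing n with
  | mem _ hy => rw [Set.mem_singleton_iff.1 hy]; exact hN n hn
  | algebraMap r => rw [← Algebra.smul_def]; exact N.smul_mem r hn
  | add y z _ _ hy hz => rw [add_mul]; exact add_mem (hy hn) (hz hn)
  | mul y z _ _ hy hz => rw [mul_assoc]; exact hy (hz hn)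

namespace AdjoinRoot

variable {R : Type*} [CommRing R] {f : R[X]}

theorem ker_algHom_eq_span_root_sub (ε : AdjoinRoot f →ₐ[R] R) {c : R} (hc : ε (root f) = c) :
    RingHom.ker ε = Ideal.span {root f - of f c} := by
  have hcomp : (ε : AdjoinRoot f →+* R).comp (mk f) = evalRingHom c := by
    ext
    · simp [← algebraMap_eq]
    · simp [hc]
  change RingHom.ker (ε : AdjoinRoot f →+* R) = _
  rw [← Ideal.map_comap_of_surjective (mk f) mk_surjective (RingHom.ker _), RingHom.comap_ker,
    hcomp, ker_evalRingHom, Ideal.map_span, Set.image_singleton, map_sub, mk_X, mk_C]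

theorem adjoin_of_sub_root_eq_top (c : R) : Algebra.adjoin R {of f c - root f} = ⊤ := by
  have h := sub_mem (Subalgebra.algebraMap_mem (Algebra.adjoin R {of f c - root f}) c)
    (Algebra.self_mem_adjoin_singleton R (of f c - root f))
  rw [algebraMap_eq, sub_sub_cancel] at h
  rwa [eq_top_iff, ← adjoinRoot_eq_top, Algebra.adjoin_le_iff, Set.singleton_subset_iff]

theorem aeval_of_sub_root (c : R) (q : R[X]) :
    aeval (of f c - root f) q = mk f (q.comp (C c - X)) := by
  rw [← aeval_eq, aeval_comp]
  simp [algebraMap_eq]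

theorem eq_zero_of_aeval_of_sub_root_eq_zero (hf : f.Monic) (c : R) {q : R[X]}
    (hq : q.degree < f.natDegree) (h : aeval (of f c - root f) q = 0) : q = 0 := by
  have hinv : (C c - X).comp (C c - X) = (X : R[X]) := by simp
  have hcomp : q.comp (C c - X) = 0 := by
    by_contra hne
    have hq0 : q ≠ 0 := by rintro rfl; exact hne zero_comp
    refine mk_ne_zero_of_natDegree_lt hf hne ?_ (by rwa [← aeval_of_sub_root])
    calc (q.comp (C c - X)).natDegree ≤ q.natDegree * (C c - X).natDegree := natDegree_comp_le
      _ ≤ q.natDegree * 1 :=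
        Nat.mul_le_mul_left _ (natDegree_sub_le_of_le (natDegree_C c).le natDegree_X_le)
      _ < f.natDegree := by rw [mul_one]; exact (natDegree_lt_iff_degree_lt hq0).mpr hq
  rw [← comp_X (p := q), ← hinv, ← comp_assoc, hcomp, zero_comp]

theorem linearIndependent_pow_of_sub_root (hf : f.Monic) (c : R) :
    LinearIndependent R fun k : Fin f.natDegree => (of f c - root f) ^ (k : ℕ) := by
  rw [Fintype.linearIndependent_iff]
  intro g hg i
  have hq := eq_zero_of_aeval_of_sub_root_eq_zero hf c (degree_sum_fin_lt g) (by
    simpa [Algebra.smul_def, algebraMap_eq] using hg)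
  simpa [finsetSum_coeff, coeff_C_mul_X_pow, Fin.val_inj] using congr_arg (coeff · i) hq

end AdjoinRoot

section

variable {A : Type*} [CommRing A] {p : ℕ} {l : A}

theorem smul_eq_sum_of_one_sub_pow_eq_one (hl : (1 - l) ^ p = 1) :
    (p : ℤ) • l = ∑ j ∈ Finset.Ico 2 (p + 1), ((-1) ^ j * p.choose j : ℤ) • l ^ j := by
  have hexp : ∑ j ∈ Finset.range (p + 1), ((-1) ^ j * p.choose j : ℤ) • l ^ j = 1 := by
    rw [← hl, sub_eq_neg_add, add_pow]
    refine Finset.sum_congr rfl fun j _ => ?_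
    rw [zsmul_eq_mul]; push_cast; ring
  obtain _ | p := p
  · simp
  rw [Finset.range_eq_Ico, Finset.sum_eq_sum_Ico_succ_bot (by omega),
    Finset.sum_eq_sum_Ico_succ_bot (by omega)] at hexp
  simp only [zero_add, pow_zero, pow_one, Nat.choose_zero_right, Nat.choose_one_right,
    zsmul_eq_mul] at hexp ⊢
  push_cast at hexp ⊢
  linear_combination -hexp

theorem smul_mem_span_sq_of_one_sub_pow_eq_one (hl : (1 - l) ^ p = 1) :
    (p : ℤ) • l ∈ Ideal.span {l ^ 2} := by
  rw [smul_eq_sum_of_one_sub_pow_eq_one hl]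
  refine Ideal.sum_mem _ fun j hj => zsmul_mem (Ideal.mem_span_singleton.2 ?_) _
  exact pow_dvd_pow l (Finset.mem_Ico.1 hj).1

variable (p l) in
def augSqGen (k : Fin (p - 1)) : A :=
  if (k : ℕ) = 0 then (p : ℤ) • l else l ^ ((k : ℕ) + 1)

theorem augSqGen_mem_span (k : Fin (p - 1)) :
    augSqGen p l k ∈ Submodule.span ℤ (Set.range (augSqGen p l)) :=
  Submodule.subset_span ⟨k, rfl⟩

theorem smul_mem_span_augSqGen (hp : 2 ≤ p) :
    (p : ℤ) • l ∈ Submodule.span ℤ (Set.range (augSqGen p l)) := by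
  simpa [augSqGen] using augSqGen_mem_span (l := l) ⟨0, by omega⟩

theorem pow_mem_span_augSqGen_of_lt {j : ℕ} (hj : 2 ≤ j) (hjp : j < p) :
    l ^ j ∈ Submodule.span ℤ (Set.range (augSqGen p l)) := by
  simpa [augSqGen, show j - 1 ≠ 0 by omega, show j - 1 + 1 = j by omega]
    using augSqGen_mem_span (l := l) ⟨j - 1, by omega⟩

theorem pow_self_mem_span_augSqGen (hl : (1 - l) ^ p = 1) (hp : 2 ≤ p) :
    l ^ p ∈ Submodule.span ℤ (Set.range (augSqGen p l)) := by
  have hid := smul_eq_sum_of_one_sub_pow_eq_one hl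
  rw [Finset.sum_Ico_succ_top hp, Nat.choose_self, Nat.cast_one, mul_one] at hid
  have htop : ((-1) ^ p : ℤ) • l ^ p ∈ Submodule.span ℤ (Set.range (augSqGen p l)) := by
    rw [eq_sub_of_add_eq' hid.symm]
    refine sub_mem (smul_mem_span_augSqGen hp) (Submodule.sum_mem _ fun j hj => ?_)
    obtain ⟨hj₂, hjp⟩ := Finset.mem_Ico.1 hj
    exact Submodule.smul_mem _ _ (pow_mem_span_augSqGen_of_lt hj₂ hjp)
  have hsign : ((-1) ^ p * (-1) ^ p : ℤ) = 1 := by rw [← mul_pow, neg_one_mul, neg_neg, one_pow]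
  simpa only [smul_smul, hsign, one_smul] using Submodule.smul_mem _ ((-1) ^ p : ℤ) htop

theorem pow_mem_span_augSqGen (hl : (1 - l) ^ p = 1) {j : ℕ} (hj : 2 ≤ j) (hjp : j ≤ p) :
    l ^ j ∈ Submodule.span ℤ (Set.range (augSqGen p l)) := by
  obtain hjp | rfl := hjp.lt_or_eq
  · exact pow_mem_span_augSqGen_of_lt hj hjp
  · exact pow_self_mem_span_augSqGen hl hj

theorem mul_mem_span_augSqGen (hl : (1 - l) ^ p = 1) {x : A}
    (hx : x ∈ Submodule.span ℤ (Set.range (augSqGen p l))) :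
    l * x ∈ Submodule.span ℤ (Set.range (augSqGen p l)) := by
  induction hx using Submodule.span_induction with
  | mem _ hx =>
    obtain ⟨k, rfl⟩ := hx
    have hk := k.isLt
    by_cases hk0 : (k : ℕ) = 0
    · rw [augSqGen, if_pos hk0, mul_smul_comm, ← sq]
      exact Submodule.smul_mem _ _ (pow_mem_span_augSqGen hl le_rfl (by omega))
    · rw [augSqGen, if_neg hk0, ← pow_succ']
      exact pow_mem_span_augSqGen hl (by omega) (by omega)
  | zero => simp
  | add x y _ _ hx hy => rw [mul_add]; exact add_mem hx hy
  | smul a x _ hx => rw [mul_smul_comm]; exact Submodule.smul_mem _ a hx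

theorem span_augSqGen_le_span_sq (hl : (1 - l) ^ p = 1) :
    Submodule.span ℤ (Set.range (augSqGen p l)) ≤ (Ideal.span {l ^ 2}).restrictScalars ℤ := by
  rw [Submodule.span_le]
  rintro _ ⟨k, rfl⟩
  by_cases hk0 : (k : ℕ) = 0
  · rw [augSqGen, if_pos hk0]
    exact smul_mem_span_sq_of_one_sub_pow_eq_one hl
  · rw [augSqGen, if_neg hk0]
    exact Ideal.mem_span_singleton.2 (pow_dvd_pow l (by omega))

theorem span_sq_le_span_augSqGen (hl : (1 - l) ^ p = 1) (hp : 3 ≤ p)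
    (hgen : Algebra.adjoin ℤ {l} = ⊤) :
    (Ideal.span {l ^ 2}).restrictScalars ℤ ≤ Submodule.span ℤ (Set.range (augSqGen p l)) := by
  intro x hx
  obtain ⟨b, rfl⟩ := Ideal.mem_span_singleton'.1 hx
  exact Submodule.mul_mem_of_adjoin_eq_top hgen (fun _ => mul_mem_span_augSqGen hl) b
    (pow_mem_span_augSqGen hl le_rfl (by omega))

theorem iSupIndep_span_augSqGen
    (hind : LinearIndependent ℤ fun k : Fin (p - 1) => l ^ ((k : ℕ) + 1)) :
    iSupIndep fun k => Submodule.span ℤ {augSqGen p l k} := by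
  refine hind.iSupIndep_span_singleton.mono fun k => ?_
  rw [Submodule.span_singleton_le_iff_mem]
  by_cases hk0 : (k : ℕ) = 0
  · rw [augSqGen, if_pos hk0]
    simpa [hk0] using Submodule.smul_mem _ (p : ℤ) (Submodule.mem_span_singleton_self l)
  · rw [augSqGen, if_neg hk0]
    exact Submodule.mem_span_singleton_self _

end

theorem stmt_9_general (p : ℕ) (hp : 3 ≤ p)
    (ε : (ℤ[X] ⧸ Ideal.span {(X : ℤ[X]) ^ p - 1}) →+* ℤ)
    (hε : ε (Ideal.Quotient.mk (Ideal.span {(X : ℤ[X]) ^ p - 1}) X) = 1) :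
    (Submodule.restrictScalars ℤ (RingHom.ker ε ^ 2) =
      ⨆ k : Fin (p - 1),
        Submodule.span ℤ
          {if (k : ℕ) = 0 then
              (p : ℤ) • (1 - Ideal.Quotient.mk (Ideal.span {(X : ℤ[X]) ^ p - 1}) X)
            else (1 - Ideal.Quotient.mk (Ideal.span {(X : ℤ[X]) ^ p - 1}) X) ^ ((k : ℕ) + 1)}) ∧
    iSupIndep (fun k : Fin (p - 1) =>
      Submodule.span ℤ
        {if (k : ℕ) = 0 then
            (p : ℤ) • (1 - Ideal.Quotient.mk (Ideal.span {(X : ℤ[X]) ^ p - 1}) X)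
          else (1 - Ideal.Quotient.mk (Ideal.span {(X : ℤ[X]) ^ p - 1}) X) ^ ((k : ℕ) + 1)}) := by
  set σ := Ideal.Quotient.mk (Ideal.span {(X : ℤ[X]) ^ p - 1}) X
  have hmonic : ((X : ℤ[X]) ^ p - 1).Monic := monic_X_pow_sub_C 1 (by omega)
  have hdeg : p - 1 + 1 = ((X : ℤ[X]) ^ p - 1).natDegree := by
    rw [← C_1, natDegree_X_pow_sub_C]; omega
  -- `AdjoinRoot (X ^ p - 1)` is by definition `ℤ[X] ⧸ Ideal.span {X ^ p - 1}`, with `root` the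
  -- class of `X`, so the facts below are read off by `exact` up to unfolding.
  have hl : (1 - (1 - σ)) ^ p = 1 := by
    have : σ ^ p - 1 = 0 := AdjoinRoot.mk_self (f := (X : ℤ[X]) ^ p - 1)
    rwa [sub_sub_cancel, ← sub_eq_zero]
  have hgen : Algebra.adjoin ℤ {1 - σ} = ⊤ := by
    have := AdjoinRoot.adjoin_of_sub_root_eq_top (f := (X : ℤ[X]) ^ p - 1) 1
    rw [map_one] at this
    exact this
  have hind : LinearIndependent ℤ fun k : Fin (p - 1) => (1 - σ) ^ ((k : ℕ) + 1) := by
    have := (AdjoinRoot.linearIndependent_pow_of_sub_root hmonic 1).comp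
      (Fin.cast hdeg ∘ Fin.succ) ((Fin.cast_injective _).comp (Fin.succ_injective _))
    rw [map_one] at this
    exact this
  have hker : RingHom.ker ε = Ideal.span {σ - 1} := by
    have := AdjoinRoot.ker_algHom_eq_span_root_sub ε.toIntAlgHom hε
    rw [map_one] at this
    exact this
  have hsq : RingHom.ker ε ^ 2 = Ideal.span {(1 - σ) ^ 2} := by
    rw [hker, Ideal.span_singleton_pow]
    congr 2
    ring
  refine ⟨?_, iSupIndep_span_augSqGen hind⟩
  rw [hsq, le_antisymm (span_sq_le_span_augSqGen hl hp hgen) (span_augSqGen_le_span_sq hl),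
    Submodule.span_range_eq_iSup]
  rfl

/-- In `R = ℤ[X]/(X^p − 1)` with `σ` the image of `X`, `λ = 1 − σ`, and `I` the kernel of
the augmentation map `ε` (induced by `X ↦ 1`), the ideal `I²`, as a `ℤ`-submodule of `R`,
is the internal direct sum `p·ℤ·λ ⊕ ⊕_{k=2}^{p−1} ℤ·λ^k`. -/
theorem stmt_9 (p : ℕ) (hp : 3 ≤ p) (hodd : Odd p)
    (ε : (ℤ[X] ⧸ Ideal.span {(X : ℤ[X]) ^ p - 1}) →+* ℤ)
    (hε : ε (Ideal.Quotient.mk (Ideal.span {(X : ℤ[X]) ^ p - 1}) X) = 1) :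
    (Submodule.restrictScalars ℤ (RingHom.ker ε ^ 2) =
      ⨆ k : Fin (p - 1),
        Submodule.span ℤ
          {if (k : ℕ) = 0 then
              (p : ℤ) • (1 - Ideal.Quotient.mk (Ideal.span {(X : ℤ[X]) ^ p - 1}) X)
            else (1 - Ideal.Quotient.mk (Ideal.span {(X : ℤ[X]) ^ p - 1}) X) ^ ((k : ℕ) + 1)}) ∧
    iSupIndep (fun k : Fin (p - 1) =>
      Submodule.span ℤ
        {if (k : ℕ) = 0 then
            (p : ℤ) • (1 - Ideal.Quotient.mk (Ideal.span {(X : ℤ[X]) ^ p - 1}) X)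
          else (1 - Ideal.Quotient.mk (Ideal.span {(X : ℤ[X]) ^ p - 1}) X) ^ ((k : ℕ) + 1)}) :=
  stmt_9_general p hp ε hε
end

section
/- Let p ≥ 3 be an odd integer. In the ring R = ℤ[X]/((X^p − 1)·ℤ[X]), let ε : R → ℤ be the ring homomorphism induced by X ↦ 1, and let I = ker ε. Then for every integer m ≥ 1, the quotient ℤ-module I^m / I^{m+1} is isomorphic to ℤ/pℤ. -/
/-!
The augmentation ideal is principal, generated by `y = X - 1`, so `I^m / I^{m+1}` is generated by
the class of `y^m`: every element of `R` is an integer modulo `y`. Hence `k ↦ k • y^m` maps `ℤ`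
onto `I^m / I^{m+1}`, and its kernel is `pℤ`. Write `X^p - 1 = Φ · (X - 1)` with
`Φ = 1 + X + ⋯ + X^{p-1}`. Since `Φ ≡ Φ(1) = p` modulo `X - 1` and `Φ · y = 0`, we get
`p y^m ∈ (y^{m+1})`. Conversely, lift a relation `k y^m ∈ (y^{m+1})` to `ℤ[X]`. There `Φ` is
relatively prime to `X - 1` because `Φ(1) = p ≠ 0` (for `p = 0`, `Φ = 0` and `ℤ[X]` is a domain),
so `Φ ∣ k - (X - 1) s` for some `s`, and evaluating at `1` gives `p ∣ k`.
-/

open Polynomial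

section SpanPowQuotient

variable {S : Type*} [CommRing S] (y : S) (n : ℕ)

abbrev SpanPowQuotient : Type _ :=
  ↥(Submodule.restrictScalars ℤ (Ideal.span {y ^ n})) ⧸
    Submodule.comap (Submodule.restrictScalars ℤ (Ideal.span {y ^ n})).subtype
      (Submodule.restrictScalars ℤ (Ideal.span {y ^ (n + 1)}))

def SpanPowQuotient.ofInt : ℤ →ₗ[ℤ] SpanPowQuotient y n :=
  Submodule.mkQ _ ∘ₗ LinearMap.toSpanSingleton ℤ _
    ⟨y ^ n, (Submodule.restrictScalars_mem ℤ _ _).2 (Ideal.mem_span_singleton_self _)⟩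

theorem SpanPowQuotient.ofInt_apply (k : ℤ) :
    SpanPowQuotient.ofInt y n k = Submodule.Quotient.mk
      (k • ⟨y ^ n, (Submodule.restrictScalars_mem ℤ _ _).2 (Ideal.mem_span_singleton_self _)⟩) :=
  rfl

theorem SpanPowQuotient.mem_ker_ofInt (k : ℤ) :
    k ∈ LinearMap.ker (SpanPowQuotient.ofInt y n) ↔
      (k : S) * y ^ n ∈ Ideal.span {y ^ (n + 1)} := by
  rw [LinearMap.mem_ker, ofInt_apply, Submodule.Quotient.mk_eq_zero, Submodule.mem_comap,
    Submodule.restrictScalars_mem, Submodule.subtype_apply, Submodule.coe_smul, zsmul_eq_mul]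

theorem SpanPowQuotient.ofInt_surjective (ε : S →+* ℤ) (hε : RingHom.ker ε = Ideal.span {y}) :
    Function.Surjective (SpanPowQuotient.ofInt y n) := by
  intro z
  obtain ⟨⟨_, hz⟩, rfl⟩ := Submodule.Quotient.mk_surjective _ z
  obtain ⟨c, rfl⟩ := Ideal.mem_span_singleton'.1 hz
  have hc : (ε c : S) - c ∈ Ideal.span {y} := by rw [← hε, RingHom.mem_ker]; simp
  obtain ⟨d, hd⟩ := Ideal.mem_span_singleton'.1 hc
  refine ⟨ε c, ?_⟩
  rw [ofInt_apply, Submodule.Quotient.eq, Submodule.mem_comap, Submodule.restrictScalars_mem,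
    Submodule.subtype_apply, Submodule.coe_sub, Submodule.coe_smul, zsmul_eq_mul, ← sub_mul, ← hd]
  exact Ideal.mem_span_singleton'.2 ⟨d, by ring⟩

end SpanPowQuotient

theorem ker_eq_span_mk_X_sub_C_one {J : Ideal ℤ[X]} (ε : ℤ[X] ⧸ J →+* ℤ)
    (hε : ε (Ideal.Quotient.mk J X) = 1) :
    RingHom.ker ε = Ideal.span {Ideal.Quotient.mk J (X - C 1)} := by
  have hcomp : ε.comp (Ideal.Quotient.mk J) = evalRingHom 1 :=
    ringHom_ext' (RingHom.ext_int _ _) (by simpa using hε)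
  rw [← Ideal.map_comap_of_surjective _ Ideal.Quotient.mk_surjective (RingHom.ker ε),
    RingHom.comap_ker, hcomp, ker_evalRingHom, Ideal.map_span, Set.image_singleton]

theorem geom_sum_X_dvd_of_dvd_X_sub_C_one_pow_mul (p n : ℕ) {a : ℤ[X]}
    (h : (∑ i ∈ Finset.range p, X ^ i) ∣ (X - C 1) ^ n * a) :
    (∑ i ∈ Finset.range p, X ^ i) ∣ a := by
  rcases eq_or_ne p 0 with rfl | hp
  · simp only [Finset.range_zero, Finset.sum_empty, zero_dvd_iff] at h ⊢
    exact (mul_eq_zero.1 h).resolve_left (pow_ne_zero _ (X_sub_C_ne_zero 1))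
  have hrel : IsRelPrime (X - C 1) (∑ i ∈ Finset.range p, X ^ i : ℤ[X]) := by
    rw [(irreducible_X_sub_C 1).isRelPrime_iff_not_dvd, dvd_iff_isRoot]
    simpa using hp
  exact hrel.symm.pow_right.dvd_of_dvd_mul_left h

theorem C_mul_X_sub_C_one_pow_mem_span_iff {p n : ℕ} (k : ℤ) :
    C k * (X - C 1) ^ (n + 1) ∈ Ideal.span {(X - C 1) ^ (n + 1 + 1), X ^ p - 1} ↔
      (p : ℤ) ∣ k := by
  have hq : (X : ℤ[X]) ^ p - 1 = (∑ i ∈ Finset.range p, X ^ i) * (X - C 1) := by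
    rw [C_1, geom_sum_mul]
  rw [Ideal.mem_span_pair, hq]
  constructor
  · rintro ⟨c, d, h⟩
    have hdvd : (∑ i ∈ Finset.range p, X ^ i) ∣ (X - C 1) ^ n * (C k - c * (X - C 1)) :=
      ⟨d, mul_left_cancel₀ (X_sub_C_ne_zero 1) (by linear_combination -h)⟩
    obtain ⟨u, hu⟩ := geom_sum_X_dvd_of_dvd_X_sub_C_one_pow_mul p n hdvd
    exact ⟨u.eval 1, by simpa using congrArg (eval 1) hu⟩
  · rintro ⟨j, rfl⟩
    obtain ⟨g, hg⟩ : X - C 1 ∣ (∑ i ∈ Finset.range p, X ^ i) - C (p : ℤ) :=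
      dvd_iff_isRoot.2 (by simp)
    refine ⟨-C j * g, C j * (X - C 1) ^ n, ?_⟩
    rw [C_mul]
    linear_combination (C j * (X - C 1) ^ (n + 1)) * hg

theorem intCast_mul_mk_X_sub_C_one_pow_mem_span_iff {p n : ℕ} (k : ℤ) :
    (k : ℤ[X] ⧸ Ideal.span {(X : ℤ[X]) ^ p - 1}) * Ideal.Quotient.mk _ (X - C 1) ^ (n + 1) ∈
      Ideal.span {Ideal.Quotient.mk (Ideal.span {(X : ℤ[X]) ^ p - 1}) (X - C 1) ^ (n + 1 + 1)} ↔
      (p : ℤ) ∣ k := by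
  rw [← C_mul_X_sub_C_one_pow_mem_span_iff, Ideal.span_insert, ← Ideal.mem_quotient_iff_mem_sup,
    Ideal.map_span, Set.image_singleton, map_mul, map_pow, map_pow, eq_intCast C k, map_intCast]

theorem stmt_10_general (p : ℕ)
    (ε : (ℤ[X] ⧸ Ideal.span {(X : ℤ[X]) ^ p - 1}) →+* ℤ)
    (hε : ε (Ideal.Quotient.mk (Ideal.span {(X : ℤ[X]) ^ p - 1}) X) = 1)
    (m : ℕ) (hm : 1 ≤ m) :
    Nonempty
      ((↥(Submodule.restrictScalars ℤ (RingHom.ker ε ^ m)) ⧸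
          Submodule.comap (Submodule.restrictScalars ℤ (RingHom.ker ε ^ m)).subtype
            (Submodule.restrictScalars ℤ (RingHom.ker ε ^ (m + 1)))) ≃ₗ[ℤ] ZMod p) := by
  obtain ⟨n, rfl⟩ := Nat.exists_eq_add_of_le' hm
  have hker := ker_eq_span_mk_X_sub_C_one ε hε
  set y := Ideal.Quotient.mk (Ideal.span {(X : ℤ[X]) ^ p - 1}) (X - C 1)
  have hker_ofInt : LinearMap.ker (SpanPowQuotient.ofInt y (n + 1)) = Ideal.span {(p : ℤ)} := by
    ext k
    rw [SpanPowQuotient.mem_ker_ofInt, intCast_mul_mk_X_sub_C_one_pow_mem_span_iff,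
      Ideal.mem_span_singleton]
  rw [hker, Ideal.span_singleton_pow, Ideal.span_singleton_pow]
  exact ⟨((SpanPowQuotient.ofInt y (n + 1)).quotKerEquivOfSurjective
      (SpanPowQuotient.ofInt_surjective y (n + 1) ε hker)).symm ≪≫ₗ
    Submodule.quotEquivOfEq _ _ hker_ofInt ≪≫ₗ (Int.quotientSpanNatEquivZMod p).toIntLinearEquiv⟩

/-- In `R = ℤ[X]/(X^p − 1)` with `I` the kernel of the augmentation map `ε`
(induced by `X ↦ 1`), one has `I^m / I^{m+1} ≅ ℤ/pℤ` as `ℤ`-modules for every `m ≥ 1`. -/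
theorem stmt_10 (p : ℕ) (hp : 3 ≤ p) (hodd : Odd p)
    (ε : (ℤ[X] ⧸ Ideal.span {(X : ℤ[X]) ^ p - 1}) →+* ℤ)
    (hε : ε (Ideal.Quotient.mk (Ideal.span {(X : ℤ[X]) ^ p - 1}) X) = 1)
    (m : ℕ) (hm : 1 ≤ m) :
    Nonempty
      ((↥(Submodule.restrictScalars ℤ (RingHom.ker ε ^ m)) ⧸
          Submodule.comap (Submodule.restrictScalars ℤ (RingHom.ker ε ^ m)).subtype
            (Submodule.restrictScalars ℤ (RingHom.ker ε ^ (m + 1)))) ≃ₗ[ℤ] ZMod p) :=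
  stmt_10_general p ε hε m hm
end
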